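/- Let π_θ be the probability measure on ℝ^d with density proportional to ∏_{i=1}^d (τ² + θ_i²)⁻² restricted to the ℓ1-ball B₁(C₁) = {θ : ‖θ‖₁ ≤ C₁}, and for θ0 with ‖θ0‖₁ ≤ C₁ − 2dτ, let p0 be the probability measure with density proportional to π_θ(θ − θ0)·1_{B₁(2dτ)}(θ − θ0). Then for d ≥ 2, ∫ ‖θ − θ0‖₂² p0(dθ) ≤ 4dτ². -/

import Mathlib

/-!
On a symmetric interval `[-r, r]` the weight `w x = (τ² + x²)⁻²` satisfies
`∫ x² w ≤ τ² ∫ w`, because `(τ² - x²) w` is the derivative of `x / (τ² + x²)`, which is odd and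
nonnegative for `x ≥ 0`. After recentring at `θ0` and fixing all coordinates but the `i`-th,
the ℓ1-truncation of the density of `p₀` confines that coordinate to exactly such an interval, so
by Fubini `E (θᵢ - θ0ᵢ)² ≤ τ²`; summing over `i` bounds the second moment by `d τ² ≤ 4 d τ²`.
-/

open MeasureTheory Real

noncomputable section

/-- Number of nonzero coordinates of a vector (the ℓ0 "norm" `s* = ‖θ‖₀`). -/
def sparsity {d : ℕ} (θ : Fin d → ℝ) : ℕ :=
  (Finset.univ.filter fun i => θ i ≠ 0).card

/-- Normalization of a measure into a probability measure. -/
def normMeasure {E : Type*} [MeasurableSpace E] (μ : Measure E) : Measure E :=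
  (μ Set.univ)⁻¹ • μ

/-- The heavy-tailed prior on `θ`, with density proportional to `∏ i (τ² + θᵢ²)⁻²`
restricted to the ℓ1-ball `B₁(C₁)`. -/
def priorTheta (d : ℕ) (τ C1 : ℝ) : Measure (Fin d → ℝ) :=
  normMeasure <| volume.withDensity fun θ => ENNReal.ofReal
    (if ∑ i, |θ i| ≤ C1 then ∏ i, ((τ ^ 2 + θ i ^ 2) ^ 2)⁻¹ else 0)

/-- The translated measure `p₀`, with density proportional to
`π_θ(θ - θ0) · 1_{B₁(2dτ)}(θ - θ0)`. -/
def translatedPrior (d : ℕ) (τ C1 : ℝ) (θ0 : Fin d → ℝ) : Measure (Fin d → ℝ) :=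
  normMeasure <| volume.withDensity fun θ => ENNReal.ofReal
    (if (∑ i, |θ i - θ0 i|) ≤ C1 ∧ (∑ i, |θ i - θ0 i|) ≤ 2 * d * τ
      then ∏ i, ((τ ^ 2 + (θ i - θ0 i) ^ 2) ^ 2)⁻¹ else 0)

open scoped ENNReal

lemma continuous_inv_sq_add_sq {τ : ℝ} (hτ : τ ≠ 0) :
    Continuous fun x : ℝ => ((τ ^ 2 + x ^ 2) ^ 2)⁻¹ :=
  Continuous.inv₀ (by fun_prop) fun x => by positivity

lemma hasDerivAt_div_sq_add_sq {τ : ℝ} (hτ : τ ≠ 0) (x : ℝ) :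
    HasDerivAt (fun y => y / (τ ^ 2 + y ^ 2)) ((τ ^ 2 - x ^ 2) * ((τ ^ 2 + x ^ 2) ^ 2)⁻¹) x := by
  have h : τ ^ 2 + x ^ 2 ≠ 0 := by positivity
  refine ((hasDerivAt_id' x).div ((hasDerivAt_pow 2 x).const_add (τ ^ 2)) h).congr_deriv ?_
  rw [div_eq_mul_inv]
  ring

lemma integral_sq_mul_inv_sq_add_sq_le {τ r : ℝ} (hτ : τ ≠ 0) (hr : 0 ≤ r) :
    ∫ x in -r..r, x ^ 2 * ((τ ^ 2 + x ^ 2) ^ 2)⁻¹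
      ≤ τ ^ 2 * ∫ x in -r..r, ((τ ^ 2 + x ^ 2) ^ 2)⁻¹ := by
  have hw := continuous_inv_sq_add_sq hτ
  have hFTC : ∫ x in -r..r, (τ ^ 2 - x ^ 2) * ((τ ^ 2 + x ^ 2) ^ 2)⁻¹
      = 2 * (r / (τ ^ 2 + r ^ 2)) := by
    rw [intervalIntegral.integral_eq_sub_of_hasDerivAt (fun x _ => hasDerivAt_div_sq_add_sq hτ x)
      ((by fun_prop : Continuous _).intervalIntegrable _ _)]
    ring
  have hpos : 0 ≤ 2 * (r / (τ ^ 2 + r ^ 2)) := by positivity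
  rw [← intervalIntegral.integral_const_mul, ← sub_nonneg,
    ← intervalIntegral.integral_sub ((by fun_prop : Continuous _).intervalIntegrable _ _)
      ((by fun_prop : Continuous _).intervalIntegrable _ _)]
  simpa only [← sub_mul] using hFTC ▸ hpos

lemma lintegral_ofReal_ite_abs_le {f : ℝ → ℝ} (hf : Continuous f) (hf0 : ∀ x, 0 ≤ f x)
    {r : ℝ} (hr : 0 ≤ r) :
    ∫⁻ x, ENNReal.ofReal (if |x| ≤ r then f x else 0) = ENNReal.ofReal (∫ x in -r..r, f x) := by
  have hind : (fun x => ENNReal.ofReal (if |x| ≤ r then f x else 0))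
      = (Set.Icc (-r) r).indicator fun x => ENNReal.ofReal (f x) := by
    ext x
    simp only [Set.indicator_apply, Set.mem_Icc, ← abs_le]
    split_ifs <;> simp
  rw [hind, lintegral_indicator measurableSet_Icc, intervalIntegral.integral_of_le (by linarith),
    ← integral_Icc_eq_integral_Ioc,
    ofReal_integral_eq_lintegral_ofReal hf.integrableOn_Icc (ae_of_all _ hf0)]

lemma lintegral_sq_mul_ite_abs_le {τ : ℝ} (hτ : τ ≠ 0) (r : ℝ) {P : ℝ} (hP : 0 ≤ P) :
    ∫⁻ x, ENNReal.ofReal (x ^ 2) *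
        ENNReal.ofReal (if |x| ≤ r then ((τ ^ 2 + x ^ 2) ^ 2)⁻¹ * P else 0)
      ≤ ENNReal.ofReal (τ ^ 2) *
        ∫⁻ x, ENNReal.ofReal (if |x| ≤ r then ((τ ^ 2 + x ^ 2) ^ 2)⁻¹ * P else 0) := by
  rcases lt_or_ge r 0 with hr | hr
  · have hout : ∀ x : ℝ, ¬|x| ≤ r := fun x h => (abs_nonneg x).trans h |>.not_gt hr
    simp [hout]
  have hw := continuous_inv_sq_add_sq hτ
  simp_rw [← ENNReal.ofReal_mul (sq_nonneg _), mul_ite, mul_zero]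
  rw [lintegral_ofReal_ite_abs_le (by fun_prop) (fun x => by positivity) hr,
    lintegral_ofReal_ite_abs_le (by fun_prop) (fun x => by positivity) hr,
    ← ENNReal.ofReal_mul (sq_nonneg _)]
  refine ENNReal.ofReal_le_ofReal ?_
  simp_rw [← mul_assoc, intervalIntegral.integral_mul_const, ← mul_assoc]
  exact mul_le_mul_of_nonneg_right (integral_sq_mul_inv_sq_add_sq_le hτ hr) hP

lemma lintegral_eq_lintegral_insertNth {n : ℕ} (i : Fin (n + 1))
    {F : (Fin (n + 1) → ℝ) → ℝ≥0∞} (hF : Measurable F) :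
    ∫⁻ θ, F θ = ∫⁻ y : Fin n → ℝ, ∫⁻ x : ℝ, F (i.insertNth x y) := by
  rw [← ((volume_preserving_piFinSuccAbove (fun _ => ℝ) i).symm _).lintegral_comp hF,
    Measure.volume_eq_prod]
  exact lintegral_prod_symm _
    (hF.comp (MeasurableEquiv.piFinSuccAbove (fun _ => ℝ) i).symm.measurable).aemeasurable

-- `priorTheta d τ M = normMeasure (volume.withDensity (truncatedDensity τ M))`.
def truncatedDensity (τ M : ℝ) {d : ℕ} (θ : Fin d → ℝ) : ℝ≥0∞ :=
  ENNReal.ofReal (if ∑ k, |θ k| ≤ M then ∏ k, ((τ ^ 2 + θ k ^ 2) ^ 2)⁻¹ else 0)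

@[fun_prop]
lemma measurable_truncatedDensity (τ M : ℝ) (d : ℕ) :
    Measurable (truncatedDensity τ M (d := d)) :=
  (Measurable.ite (measurableSet_le (by fun_prop) measurable_const) (by fun_prop)
    measurable_const).ennreal_ofReal

lemma lintegral_sq_mul_truncatedDensity_le {n : ℕ} {τ : ℝ} (hτ : τ ≠ 0) (M : ℝ)
    (i : Fin (n + 1)) :
    ∫⁻ θ : Fin (n + 1) → ℝ, ENNReal.ofReal (θ i ^ 2) * truncatedDensity τ M θ
      ≤ ENNReal.ofReal (τ ^ 2) * ∫⁻ θ : Fin (n + 1) → ℝ, truncatedDensity τ M θ := by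
  rw [lintegral_eq_lintegral_insertNth i (by fun_prop),
    lintegral_eq_lintegral_insertNth i (by fun_prop),
    ← lintegral_const_mul' _ _ ENNReal.ofReal_ne_top]
  refine lintegral_mono fun y => ?_
  simp only [truncatedDensity, Fin.sum_univ_succAbove _ i, Fin.prod_univ_succAbove _ i,
    Fin.insertNth_apply_same, Fin.insertNth_apply_succAbove, ← le_sub_iff_add_le]
  exact lintegral_sq_mul_ite_abs_le hτ _ (Finset.prod_nonneg fun j _ => by positivity)

lemma lintegral_sum_sq_mul_truncatedDensity_le {d : ℕ} {τ : ℝ} (hτ : τ ≠ 0) (M : ℝ) :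
    ∫⁻ θ : Fin d → ℝ, ENNReal.ofReal (∑ k, θ k ^ 2) * truncatedDensity τ M θ
      ≤ ENNReal.ofReal (d * τ ^ 2) * ∫⁻ θ : Fin d → ℝ, truncatedDensity τ M θ := by
  rcases d with _ | n
  · simp
  simp_rw [ENNReal.ofReal_sum_of_nonneg (fun k _ => sq_nonneg _), Finset.sum_mul]
  rw [lintegral_finsetSum _ fun k _ => by fun_prop,
    ENNReal.ofReal_mul (by positivity), ENNReal.ofReal_natCast, mul_assoc]
  calc ∑ k, ∫⁻ θ, ENNReal.ofReal (θ k ^ 2) * truncatedDensity τ M θ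
      ≤ ∑ _k : Fin (n + 1), ENNReal.ofReal (τ ^ 2) * ∫⁻ θ, truncatedDensity τ M θ :=
        Finset.sum_le_sum fun k _ => lintegral_sq_mul_truncatedDensity_le hτ M k
    _ = _ := by simp

lemma integral_normMeasure_le {E : Type*} [MeasurableSpace E] {μ : Measure E} {f : E → ℝ}
    (hf : 0 ≤ f) {c : ℝ} (hc : 0 ≤ c)
    (h : ∫⁻ x, ENNReal.ofReal (f x) ∂μ ≤ ENNReal.ofReal c * μ Set.univ) :
    ∫ x, f x ∂(normMeasure μ) ≤ c := by
  by_cases hfm : AEStronglyMeasurable f (normMeasure μ)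
  swap
  · rw [integral_non_aestronglyMeasurable hfm]
    exact hc
  rw [integral_eq_lintegral_of_nonneg_ae (ae_of_all _ hf) hfm, normMeasure,
    lintegral_smul_measure, smul_eq_mul]
  refine ENNReal.toReal_le_of_le_ofReal hc ?_
  -- If `μ univ` is `0` or `∞`, then `normMeasure μ = 0`.
  rcases eq_or_ne (μ Set.univ) 0 with h0 | h0
  · simp_all
  rcases eq_or_ne (μ Set.univ) ⊤ with htop | htop
  · simp [htop]
  rwa [ENNReal.inv_mul_le_iff h0 htop, mul_comm]

lemma integral_sum_sq_sub_le {d : ℕ} {τ : ℝ} (hτ : τ ≠ 0) (M : ℝ) (θ0 : Fin d → ℝ) :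
    ∫ θ, ∑ i, (θ i - θ0 i) ^ 2
        ∂(normMeasure (volume.withDensity fun θ => truncatedDensity τ M (θ - θ0)))
      ≤ d * τ ^ 2 := by
  refine integral_normMeasure_le (fun θ => by positivity) (by positivity) ?_
  rw [withDensity_apply _ MeasurableSet.univ, setLIntegral_univ,
    lintegral_withDensity_eq_lintegral_mul _ (by fun_prop) (by fun_prop)]
  have hshift := lintegral_sub_right_eq_self (μ := volume)
    (fun θ => ENNReal.ofReal (∑ i, θ i ^ 2) * truncatedDensity τ M θ) θ0
  simp only [Pi.sub_apply] at hshift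
  simp only [Pi.mul_apply, mul_comm (truncatedDensity _ _ _)]
  rw [hshift, lintegral_sub_right_eq_self (truncatedDensity τ M)]
  exact lintegral_sum_sq_mul_truncatedDensity_le hτ M

lemma translatedPrior_eq (d : ℕ) (τ C1 : ℝ) (θ0 : Fin d → ℝ) :
    translatedPrior d τ C1 θ0
      = normMeasure
          (volume.withDensity fun θ => truncatedDensity τ (min C1 (2 * d * τ)) (θ - θ0)) := by
  simp only [translatedPrior, truncatedDensity, Pi.sub_apply, le_min_iff]

theorem statement_18_general (d : ℕ) (τ C1 : ℝ) (hτ : 0 < τ)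
    (θ0 : Fin d → ℝ) :
    (∫ θ, ∑ i, (θ i - θ0 i) ^ 2 ∂(translatedPrior d τ C1 θ0)) ≤ 4 * d * τ ^ 2 := by
  rw [translatedPrior_eq]
  calc _ ≤ d * τ ^ 2 := integral_sum_sq_sub_le hτ.ne' _ θ0
    _ ≤ 4 * d * τ ^ 2 := by
      have : 0 ≤ (d : ℝ) * τ ^ 2 := by positivity
      linarith

/-- Lemma `lema_boundfor_ell2`: for the translated measure `p₀` and `d ≥ 2`,
`∫ ‖θ - θ0‖₂² p₀(dθ) ≤ 4 d τ²`. -/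
theorem statement_18 (d : ℕ) (hd : 2 ≤ d) (τ C1 : ℝ) (hτ : 0 < τ) (hdτ : 2 * d * τ < C1)
    (θ0 : Fin d → ℝ) (hθ0 : (∑ i, |θ0 i|) ≤ C1 - 2 * d * τ) :
    (∫ θ, ∑ i, (θ i - θ0 i) ^ 2 ∂(translatedPrior d τ C1 θ0)) ≤ 4 * d * τ ^ 2 :=
  statement_18_general d τ C1 hτ θ0
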